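/- arXiv:1307.7544 — 4 statements merged into one kernel-verified Lean document; each statement's English description precedes it below -/
import Mathlib

section
/- If A is an n×(mr) complex matrix partitioned into m blocks A_1,...,A_m each of size n×r, with unit-norm columns and orthonormal columns within each block, and if mr > n, then the worst-case block coherence μ(A) = max_{i≠j} ‖A_i* A_j‖ (operator norm) satisfies μ(A) ≥ sqrt((mr - n)/(n(m-1))). -/
/-!
Let `H = ∑ i, A i * (A i)ᴴ`. Its trace is `m r`, while its squared Frobenius norm is
`∑ i j, ‖(A i)ᴴ * A j‖_F²`: the `m` diagonal terms equal `r`, and each of the `m (m - 1)`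
off-diagonal ones is at most `r μ²`, since an `r`-column matrix has squared Frobenius norm
at most `r` times its squared spectral norm. Cauchy–Schwarz on the diagonal of `H` gives
`(tr H)² ≤ n ‖H‖_F²`, i.e. `(m r)² ≤ n (m r + m (m - 1) r μ²)`, which rearranges to
the bound.
-/

open Matrix Finset Filter

noncomputable def specNorm {α β : Type*} [Fintype α] [Fintype β] [DecidableEq β]
    (X : Matrix α β ℂ) : ℝ :=
  ‖LinearMap.toContinuousLinearMap (Matrix.toEuclideanLin X)‖

section Frobenius

variable {𝕜 α β ι : Type*} [RCLike 𝕜] [Fintype α] [Fintype β]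

def frobeniusNormSq (X : Matrix α β 𝕜) : ℝ := ∑ a, ∑ b, ‖X a b‖ ^ 2

lemma trace_mul_conjTranspose_self_eq_frobeniusNormSq (X : Matrix α β 𝕜) :
    trace (X * Xᴴ) = (frobeniusNormSq X : 𝕜) := by
  simp only [trace, diag_apply, mul_apply, conjTranspose_apply, frobeniusNormSq]
  push_cast
  exact sum_congr rfl fun a _ => sum_congr rfl fun b _ => RCLike.mul_conj (X a b)

lemma frobeniusNormSq_one [DecidableEq α] :
    frobeniusNormSq (1 : Matrix α α 𝕜) = Fintype.card α := by
  simp [frobeniusNormSq, one_apply, apply_ite]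

lemma sq_norm_trace_le_card_mul_frobeniusNormSq (X : Matrix α α 𝕜) :
    ‖trace X‖ ^ 2 ≤ Fintype.card α * frobeniusNormSq X :=
  calc ‖trace X‖ ^ 2 ≤ (∑ a, ‖X a a‖) ^ 2 := by
        gcongr; exact norm_sum_le _ _
    _ ≤ Fintype.card α * ∑ a, ‖X a a‖ ^ 2 := sq_sum_le_card_mul_sum_sq
    _ ≤ Fintype.card α * frobeniusNormSq X := by
        gcongr
        exact sum_le_sum fun a _ =>
          single_le_sum (f := fun b => ‖X a b‖ ^ 2) (fun _ _ => by positivity) (mem_univ a)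

lemma frobeniusNormSq_sum_mul_conjTranspose [Fintype ι] (A : ι → Matrix α β 𝕜) :
    frobeniusNormSq (∑ i, A i * (A i)ᴴ) = ∑ i, ∑ j, frobeniusNormSq ((A i)ᴴ * A j) := by
  have hterm : ∀ i j, trace (A i * (A i)ᴴ * (A j * (A j)ᴴ)ᴴ)
      = trace ((A i)ᴴ * A j * ((A i)ᴴ * A j)ᴴ) := by
    intro i j
    simp only [conjTranspose_mul, conjTranspose_conjTranspose, Matrix.mul_assoc]
    rw [trace_mul_comm]
    simp only [Matrix.mul_assoc]
  apply RCLike.ofReal_injective (K := 𝕜)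
  push_cast
  simp only [← trace_mul_conjTranspose_self_eq_frobeniusNormSq, conjTranspose_sum, sum_mul_sum,
    trace_sum, hterm]

lemma trace_sum_mul_conjTranspose_of_conjTranspose_mul_self_eq_one [Fintype ι] [DecidableEq β]
    (A : ι → Matrix α β 𝕜) (hA : ∀ i, (A i)ᴴ * A i = 1) :
    trace (∑ i, A i * (A i)ᴴ) = Fintype.card ι * Fintype.card β := by
  simp only [trace_sum, trace_mul_comm (A _), hA, trace_one, sum_const, card_univ, nsmul_eq_mul]

end Frobenius

lemma sum_sum_le_of_diag_le_of_offDiag_le {ι : Type*} [Fintype ι] [DecidableEq ι]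
    (F : ι → ι → ℝ) {d c : ℝ} (hd : ∀ i, F i i ≤ d) (hc : ∀ i j, i ≠ j → F i j ≤ c) :
    ∑ i, ∑ j, F i j ≤
      Fintype.card ι * d + Fintype.card ι * (Fintype.card ι - 1) * c := by
  have hrow : ∀ i, ∑ j, F i j ≤ d + (Fintype.card ι - 1) * c := by
    intro i
    rw [← add_sum_erase _ _ (mem_univ i)]
    gcongr
    · exact hd i
    · calc ∑ j ∈ univ.erase i, F i j ≤ #(univ.erase i) • c :=
            sum_le_card_nsmul _ _ _ fun j hj => hc i j (ne_of_mem_erase hj).symm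
        _ = (Fintype.card ι - 1) * c := by
            rw [card_erase_of_mem (mem_univ i), nsmul_eq_mul, card_univ,
              Nat.cast_pred (Fintype.card_pos_iff.2 ⟨i⟩)]
  calc ∑ i, ∑ j, F i j ≤ ∑ _i : ι, (d + (Fintype.card ι - 1) * c) :=
        sum_le_sum fun i _ => hrow i
    _ = _ := by rw [sum_const, card_univ, nsmul_eq_mul]; ring

section SpecNorm

variable {ι α β : Type*} [Fintype α] [Fintype β] [DecidableEq β]

lemma specNorm_nonneg (X : Matrix α β ℂ) : 0 ≤ specNorm X :=
  norm_nonneg _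

lemma sum_sq_norm_col_le_specNorm_sq (X : Matrix α β ℂ) (b : β) :
    ∑ a, ‖X a b‖ ^ 2 ≤ specNorm X ^ 2 := by
  have hcol : ‖toEuclideanLin X (EuclideanSpace.single b 1)‖ ^ 2 = ∑ a, ‖X a b‖ ^ 2 := by
    rw [EuclideanSpace.norm_sq_eq]
    simp [mulVec_single]
  rw [← hcol]
  gcongr
  simpa [specNorm] using
    (LinearMap.toContinuousLinearMap (toEuclideanLin X)).le_opNorm (EuclideanSpace.single b 1)

lemma frobeniusNormSq_le_card_mul_specNorm_sq (X : Matrix α β ℂ) :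
    frobeniusNormSq X ≤ Fintype.card β * specNorm X ^ 2 :=
  calc frobeniusNormSq X = ∑ b, ∑ a, ‖X a b‖ ^ 2 := sum_comm
    _ ≤ ∑ _b : β, specNorm X ^ 2 := sum_le_sum fun b _ => sum_sq_norm_col_le_specNorm_sq X b
    _ = Fintype.card β * specNorm X ^ 2 := by simp

lemma sq_card_mul_card_le_of_specNorm_conjTranspose_mul_le [Fintype ι] [DecidableEq ι]
    (A : ι → Matrix α β ℂ) (hA : ∀ i, (A i)ᴴ * A i = 1) {μ : ℝ}
    (hμ : ∀ i j, i ≠ j → specNorm ((A i)ᴴ * A j) ≤ μ) :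
    ((Fintype.card ι : ℝ) * Fintype.card β) ^ 2 ≤ Fintype.card α *
      (Fintype.card ι * Fintype.card β +
        Fintype.card ι * (Fintype.card ι - 1) * (Fintype.card β * μ ^ 2)) := by
  set H := ∑ i, A i * (A i)ᴴ
  have hoff : ∀ i j, i ≠ j → frobeniusNormSq ((A i)ᴴ * A j) ≤ Fintype.card β * μ ^ 2 :=
    fun i j hij => (frobeniusNormSq_le_card_mul_specNorm_sq _).trans <| by
      gcongr
      exacts [specNorm_nonneg _, hμ i j hij]
  have hfrob : frobeniusNormSq H ≤ Fintype.card ι * Fintype.card β +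
      Fintype.card ι * (Fintype.card ι - 1) * (Fintype.card β * μ ^ 2) := by
    rw [frobeniusNormSq_sum_mul_conjTranspose]
    exact sum_sum_le_of_diag_le_of_offDiag_le _ (fun i => by simp [hA, frobeniusNormSq_one]) hoff
  calc ((Fintype.card ι : ℝ) * Fintype.card β) ^ 2 = ‖trace H‖ ^ 2 := by
        rw [trace_sum_mul_conjTranspose_of_conjTranspose_mul_self_eq_one A hA]; norm_cast
    _ ≤ Fintype.card α * frobeniusNormSq H := sq_norm_trace_le_card_mul_frobeniusNormSq H
    _ ≤ _ := by gcongr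

end SpecNorm

theorem stmt0_general (n m r : ℕ) (hmr : n < m * r)
    (A : Fin m → Matrix (Fin n) (Fin r) ℂ)
    (horth : ∀ i, (A i)ᴴ * A i = 1)
    (hne : (Finset.univ.filter (fun pr : Fin m × Fin m => pr.1 ≠ pr.2)).Nonempty) :
    Real.sqrt (((m : ℝ) * r - n) / (n * ((m : ℝ) - 1))) ≤
      (Finset.univ.filter (fun pr : Fin m × Fin m => pr.1 ≠ pr.2)).sup' hne
        (fun pr => specNorm ((A pr.1)ᴴ * A pr.2)) := by
  set μ := (univ.filter (fun pr : Fin m × Fin m => pr.1 ≠ pr.2)).sup' hne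
    (fun pr => specNorm ((A pr.1)ᴴ * A pr.2))
  have hcoh : ∀ i j, i ≠ j → specNorm ((A i)ᴴ * A j) ≤ μ := fun i j hij =>
    le_sup' (f := fun pr : Fin m × Fin m => specNorm ((A pr.1)ᴴ * A pr.2)) (b := (i, j))
      (mem_filter.2 ⟨mem_univ _, hij⟩)
  have hμ : 0 ≤ μ := by
    obtain ⟨⟨i, j⟩, hij⟩ := hne
    exact (specNorm_nonneg _).trans (hcoh i j (mem_filter.1 hij).2)
  have key := sq_card_mul_card_le_of_specNorm_conjTranspose_mul_le A horth hcoh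
  simp only [Fintype.card_fin] at key
  have hmr_pos : 0 < m * r := (Nat.zero_le n).trans_lt hmr
  have hm : (1 : ℝ) ≤ m := by exact_mod_cast Nat.pos_of_mul_pos_right hmr_pos
  have hbound : (m : ℝ) * r ≤ n + μ ^ 2 * (n * (m - 1)) :=
    le_of_mul_le_mul_left (a := (m : ℝ) * r) (by linear_combination key)
      (by exact_mod_cast hmr_pos)
  rw [Real.sqrt_le_left hμ]
  exact div_le_of_le_mul₀ (mul_nonneg n.cast_nonneg (sub_nonneg.2 hm)) (sq_nonneg μ)
    (by linarith)

/-- Universal lower bound on worst-case block coherence. -/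
theorem stmt0 (n m r : ℕ) (hn : 0 < n) (hr : 0 < r) (hm : 2 ≤ m)
    (hrn : r < n) (hmr : n < m * r)
    (A : Fin m → Matrix (Fin n) (Fin r) ℂ)
    (horth : ∀ i, (A i)ᴴ * A i = 1)
    (hne : (Finset.univ.filter (fun pr : Fin m × Fin m => pr.1 ≠ pr.2)).Nonempty) :
    Real.sqrt (((m : ℝ) * r - n) / (n * ((m : ℝ) - 1))) ≤
      (Finset.univ.filter (fun pr : Fin m × Fin m => pr.1 ≠ pr.2)).sup' hne
        (fun pr => specNorm ((A pr.1)ᴴ * A pr.2)) :=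
  stmt0_general n m r hmr A horth hne
end

section
/- If A = P ⊗ Q where Q ∈ ℂ^{r×r} is unitary and P ∈ ℂ^{(n/r)×m} has unit-norm columns, then the average block coherence of A equals the average column coherence of P: ν(A) = ν₁(P). -/
/-!
Each block product is a scalar matrix, `(p_i ⊗ Q)ᴴ (p_j ⊗ Q) = ⟨p_i, p_j⟩ QᴴQ = ⟨p_i, p_j⟩ I`,
so the `i`-th block sum is `(∑_{j ≠ i} ⟨p_i, p_j⟩) I`, whose spectral norm is `|∑_{j ≠ i} ⟨p_i, p_j⟩|`.
-/

open Matrix Finset Filter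

/-- The Kronecker product `p ⊗ Q` of a column vector `p ∈ ℂ^k` with an `r × r`
matrix `Q`, viewed as a `(k·r) × r` matrix (rows indexed by `Fin k × Fin r`). -/
def kronBlock {k r : ℕ} (p : Fin k → ℂ) (Q : Matrix (Fin r) (Fin r) ℂ) :
    Matrix (Fin k × Fin r) (Fin r) ℂ :=
  fun st b => p st.1 * Q st.2 b

theorem specNorm_smul {α β : Type*} [Fintype α] [Fintype β] [DecidableEq β]
    (c : ℂ) (X : Matrix α β ℂ) : specNorm (c • X) = ‖c‖ * specNorm X := by
  unfold specNorm
  rw [_root_.map_smul, _root_.map_smul, norm_smul]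

theorem specNorm_one {n : Type*} [Fintype n] [DecidableEq n] [Nonempty n] :
    specNorm (1 : Matrix n n ℂ) = 1 := by
  rw [specNorm, toEuclideanLin, toLpLin_one]
  exact ContinuousLinearMap.norm_id (𝕜 := ℂ) (E := EuclideanSpace ℂ n)

theorem kronBlock_conjTranspose_mul_kronBlock {k r : ℕ} (p q : Fin k → ℂ)
    (Q : Matrix (Fin r) (Fin r) ℂ) :
    (kronBlock p Q)ᴴ * kronBlock q Q = (star p ⬝ᵥ q) • (Qᴴ * Q) := by
  ext a b
  simp only [mul_apply, conjTranspose_apply, kronBlock, Matrix.smul_apply, smul_eq_mul, dotProduct,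
    Pi.star_apply, Fintype.sum_prod_type, star_mul', Finset.sum_mul_sum]
  exact Finset.sum_congr rfl fun _ _ => Finset.sum_congr rfl fun _ _ => by ring

theorem stmt8_general (k r m : ℕ) (hr : 0 < r)
    (p : Fin m → (Fin k → ℂ)) (Q : Matrix (Fin r) (Fin r) ℂ) (hQ : Qᴴ * Q = 1)
    (hne : (Finset.univ : Finset (Fin m)).Nonempty) :
    (1 / ((m : ℝ) - 1)) * Finset.univ.sup' hne (fun i =>
        specNorm (∑ j ∈ Finset.univ.erase i, (kronBlock (p i) Q)ᴴ * kronBlock (p j) Q)) =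
    (1 / ((m : ℝ) - 1)) * Finset.univ.sup' hne (fun i =>
        ‖∑ j ∈ Finset.univ.erase i, star (p i) ⬝ᵥ p j‖) := by
  have : Nonempty (Fin r) := ⟨⟨0, hr⟩⟩
  congr 1
  refine Finset.sup'_congr hne rfl fun i _ => ?_
  simp only [kronBlock_conjTranspose_mul_kronBlock, hQ, ← Finset.sum_smul]
  rw [specNorm_smul, specNorm_one, mul_one]

/-- For A = P ⊗ Q with Q unitary and P having unit-norm columns, the average block
coherence of A equals the average column coherence of P. -/
theorem stmt8 (k r m : ℕ) (hr : 0 < r) (hm : 2 ≤ m)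
    (p : Fin m → (Fin k → ℂ)) (Q : Matrix (Fin r) (Fin r) ℂ) (hQ : Qᴴ * Q = 1)
    (hcol : ∀ i, star (p i) ⬝ᵥ p i = 1)
    (hne : (Finset.univ : Finset (Fin m)).Nonempty) :
    (1 / ((m : ℝ) - 1)) * Finset.univ.sup' hne (fun i =>
        specNorm (∑ j ∈ Finset.univ.erase i, (kronBlock (p i) Q)ᴴ * kronBlock (p j) Q)) =
    (1 / ((m : ℝ) - 1)) * Finset.univ.sup' hne (fun i =>
        ‖∑ j ∈ Finset.univ.erase i, star (p i) ⬝ᵥ p j‖) :=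
  stmt8_general k r m hr p Q hQ hne
end

section
/- For each β ∈ (0, 1/2), the function g(a) = β ln a + ((1−2β)/2) ln(1 − aβ) − (1−β) ln(1−β) has a unique zero on the interval [2, 1/β): g(2) > 0, g is strictly decreasing on [2, 1/β), and g(a) → −∞ as a → 1/β⁻. -/
/-!
The derivative `β (2 - a) / (2a (1 - aβ))` of `g β` is negative for `a > 2`, and the term
`log (1 - aβ)` drives `g β` to `-∞` at `1/β`. Positivity at `a = 2` is the midpoint convexity of `x ↦ x log x` at `1 - 2β` and `1`, which
gives `(1 - β) log (1 - β) ≤ ((1 - 2β)/2) log (1 - 2β)`, plus `β log 2 > 0`. The unique zero then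
comes from the intermediate value theorem.
-/

open Filter Set Real Topology

noncomputable def g (β a : ℝ) : ℝ :=
  β * log a + ((1 - 2*β)/2) * log (1 - a*β) - (1 - β) * log (1 - β)

theorem existsUnique_zero_of_strictAntiOn_Ico {α : Type*} [ConditionallyCompleteLinearOrder α]
    [TopologicalSpace α] [OrderTopology α] [DenselyOrdered α] {f : α → ℝ} {a b : α}
    (hab : a < b) (hf : ContinuousOn f (Ico a b)) (hanti : StrictAntiOn f (Ico a b))
    (ha : 0 < f a) (hb : Tendsto f (𝓝[<] b) atBot) :
    ∃! x, x ∈ Ico a b ∧ f x = 0 := by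
  have : (𝓝[<] b).NeBot := nhdsLT_neBot_of_exists_lt ⟨a, hab⟩
  obtain ⟨c, hfc, hc⟩ :=
    ((hb.eventually_lt_atBot 0).and (Ioo_mem_nhdsLT hab)).exists
  have hsub : Icc a c ⊆ Ico a b := Icc_subset_Ico_right hc.2
  obtain ⟨x, hx, hfx⟩ :=
    intermediate_value_Icc' hc.1.le (hf.mono hsub) ⟨hfc.le, ha.le⟩
  exact ⟨x, ⟨hsub hx, hfx⟩, fun y hy => hanti.injOn hy.1 (hsub hx) (hy.2.trans hfx.symm)⟩

theorem half_add_mul_log_half_add_le {x y : ℝ} (hx : 0 ≤ x) (hy : 0 ≤ y) :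
    (x + y) / 2 * log ((x + y) / 2) ≤ (x * log x + y * log y) / 2 := by
  have h := convexOn_mul_log.2 (mem_Ici.2 hx) (mem_Ici.2 hy)
    (by norm_num : (0 : ℝ) ≤ 1/2) (by norm_num : (0 : ℝ) ≤ 1/2) (by norm_num)
  simp only [smul_eq_mul] at h
  rw [show 1/2 * x + 1/2 * y = (x + y) / 2 by ring] at h
  linarith

theorem g_two_pos {β : ℝ} (hβ₀ : 0 < β) (hβ : β ≤ 1/2) : 0 < g β 2 := by
  have hconv := half_add_mul_log_half_add_le (x := 1 - 2*β) (by linarith) zero_le_one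
  rw [log_one, mul_zero, add_zero, show (1 - 2*β + 1) / 2 = 1 - β by ring] at hconv
  have hlog2 : 0 < β * log 2 := mul_pos hβ₀ (log_pos one_lt_two)
  unfold g
  linarith

theorem hasDerivAt_g {β a : ℝ} (ha : a ≠ 0) (haβ : 1 - a*β ≠ 0) :
    HasDerivAt (g β) (β * (2 - a) / (2 * a * (1 - a*β))) a := by
  have hlin : HasDerivAt (fun a => 1 - a*β) (-β) a := by
    simpa using ((hasDerivAt_id a).mul_const β).const_sub 1
  have h := (((hasDerivAt_log ha).const_mul β).add
    ((hlin.log haβ).const_mul ((1 - 2*β)/2))).sub_const ((1 - β) * log (1 - β))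
  have : 1 - β*a ≠ 0 := by rwa [mul_comm]
  refine h.congr_deriv ?_
  field_simp
  ring

theorem pos_and_one_sub_mul_pos_of_mem_Ico {β a : ℝ} (hβ₀ : 0 < β) (ha : a ∈ Ico 2 (1/β)) :
    0 < a ∧ 0 < 1 - a*β := by
  have := (lt_div_iff₀ hβ₀).1 ha.2
  exact ⟨by linarith [ha.1], by linarith⟩

theorem continuousOn_g {β : ℝ} (hβ₀ : 0 < β) : ContinuousOn (g β) (Ico 2 (1/β)) := fun _ ha =>
  have ⟨ha₀, haβ⟩ := pos_and_one_sub_mul_pos_of_mem_Ico hβ₀ ha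
  (hasDerivAt_g ha₀.ne' haβ.ne').continuousAt.continuousWithinAt

theorem strictAntiOn_g {β : ℝ} (hβ₀ : 0 < β) : StrictAntiOn (g β) (Ico 2 (1/β)) := by
  refine strictAntiOn_of_hasDerivWithinAt_neg (f' := fun a => β * (2 - a) / (2 * a * (1 - a*β)))
    (convex_Ico 2 (1/β)) (continuousOn_g hβ₀)
    (fun a ha => ?_) (fun a ha => ?_)
  all_goals
    rw [interior_Ico] at ha
    obtain ⟨ha₀, haβ⟩ := pos_and_one_sub_mul_pos_of_mem_Ico hβ₀ (Ioo_subset_Ico_self ha)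
  · exact (hasDerivAt_g ha₀.ne' haβ.ne').hasDerivWithinAt
  · have : β * (2 - a) < 0 := mul_neg_of_pos_of_neg hβ₀ (by linarith [ha.1])
    exact div_neg_of_neg_of_pos this (by positivity)

theorem tendsto_g_atBot {β : ℝ} (hβ₀ : 0 < β) (hβ : β < 1/2) :
    Tendsto (g β) (𝓝[<] (1/β)) atBot := by
  have hlin : Tendsto (fun a => 1 - a*β) (𝓝[<] (1/β)) (𝓝[>] 0) := by
    refine tendsto_nhdsWithin_of_tendsto_nhds_of_eventually_within _ ?_ ?_
    · have : Tendsto (fun a => 1 - a*β) (𝓝 (1/β)) (𝓝 (1 - 1/β*β)) :=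
        (continuous_const.sub (continuous_id.mul continuous_const)).tendsto _
      rw [one_div_mul_cancel hβ₀.ne', sub_self] at this
      exact this.mono_left nhdsWithin_le_nhds
    · filter_upwards [self_mem_nhdsWithin] with a ha
      exact sub_pos.2 ((lt_div_iff₀ hβ₀).1 ha)
  have hlog : Tendsto (fun a => ((1 - 2*β)/2) * log (1 - a*β)) (𝓝[<] (1/β)) atBot :=
    (tendsto_log_nhdsGT_zero.comp hlin).const_mul_atBot (by linarith)
  have hrest : Tendsto (fun a => β * log a - (1 - β) * log (1 - β)) (𝓝[<] (1/β))
      (𝓝 (β * log (1/β) - (1 - β) * log (1 - β))) :=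
    (((continuousAt_log (by positivity)).const_mul β).sub continuousAt_const).mono_left
      nhdsWithin_le_nhds
  exact (hrest.add_atBot hlog).congr fun a => by unfold g; ring

/-- For β ∈ (0, 1/2), g(a) = β ln a + ((1−2β)/2) ln(1−aβ) − (1−β) ln(1−β) satisfies
g(2) > 0, is strictly decreasing on [2, 1/β), tends to −∞ as a → (1/β)⁻, and has a
unique zero on [2, 1/β). -/
theorem stmt13 (β : ℝ) (hβ : β ∈ Set.Ioo (0:ℝ) (1/2)) :
    (0 < β * Real.log 2 + ((1 - 2*β)/2) * Real.log (1 - 2*β) - (1 - β) * Real.log (1 - β)) ∧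
    StrictAntiOn
      (fun a => β * Real.log a + ((1 - 2*β)/2) * Real.log (1 - a*β) - (1 - β) * Real.log (1 - β))
      (Set.Ico 2 (1/β)) ∧
    Tendsto
      (fun a => β * Real.log a + ((1 - 2*β)/2) * Real.log (1 - a*β) - (1 - β) * Real.log (1 - β))
      (nhdsWithin (1/β) (Set.Iio (1/β))) atBot ∧
    (∃! a, a ∈ Set.Ico (2:ℝ) (1/β) ∧
      β * Real.log a + ((1 - 2*β)/2) * Real.log (1 - a*β) - (1 - β) * Real.log (1 - β) = 0) := by
  obtain ⟨hβ₀, hβ⟩ := hβ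
  have htwo : (2 : ℝ) < 1/β := by rw [lt_div_iff₀ hβ₀]; linarith
  exact ⟨g_two_pos hβ₀ hβ.le, strictAntiOn_g hβ₀, tendsto_g_atBot hβ₀ hβ,
    existsUnique_zero_of_strictAntiOn_Ico htwo (continuousOn_g hβ₀) (strictAntiOn_g hβ₀)
      (g_two_pos hβ₀ hβ.le) (tendsto_g_atBot hβ₀ hβ)⟩
end

section
/- Let ρ ∈ (0,1) and x ∈ (0, ρ). If p, q → ∞ with p/(p+q) → ρ, then (1/(p+q)) ln I_x(p,q) → −[ρ ln(ρ/x) + (1−ρ) ln((1−ρ)/(1−x))], where I_x(p,q) is the regularized incomplete Beta function. -/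
open Filter

/-- The Beta function B(p,q) = ∫₀¹ t^(p-1) (1-t)^(q-1) dt. -/
noncomputable def betaFn (p q : ℝ) : ℝ :=
  ∫ t in (0:ℝ)..1, t ^ (p - 1) * (1 - t) ^ (q - 1)

/-- The regularized incomplete Beta function I_x(p,q). -/
noncomputable def regIncBeta (x p q : ℝ) : ℝ :=
  (∫ t in (0:ℝ)..x, t ^ (p - 1) * (1 - t) ^ (q - 1)) / betaFn p q

/-!
Laplace's method. With `n = p + q`, the kernel `t^(p-1) (1-t)^(q-1)` is `exp` of roughly
`n (ρ log t + (1-ρ) log (1-t))`, so `(1/n) log ∫₀ᵉ` tends to the maximum of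
`ρ log t + (1-ρ) log (1-t)` over `[0, e]`: at `t = x` for the incomplete integral (eventually `x`
lies below the mode `(p-1)/(p+q-2) → ρ`), at `t = ρ` for the complete one. The logarithm of the
kernel is concave, so it lies below its tangent line; this bounds the integral by the length of
the interval times the maximum of the kernel. Conversely, the integral exceeds that of the kernel
over a short interval `[c, e]` left of the maximiser. Subtracting the two limits gives the
Kullback–Leibler divergence of `ρ` from `x`.
-/

open Real Set Topology

noncomputable def incBeta (x p q : ℝ) : ℝ :=
  ∫ t in (0:ℝ)..x, t ^ (p - 1) * (1 - t) ^ (q - 1)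

lemma regIncBeta_eq_div (x p q : ℝ) : regIncBeta x p q = incBeta x p q / incBeta 1 p q := rfl

noncomputable def bernoulliLogLik (ρ t : ℝ) : ℝ := ρ * log t + (1 - ρ) * log (1 - t)

section Kernel

variable {a b c t : ℝ}

lemma mul_log_add_mul_log_one_sub_le (ha : 0 ≤ a) (hb : 0 ≤ b) (hc0 : 0 < c) (hc1 : c < 1)
    (ht0 : 0 < t) (ht1 : t < 1) :
    a * log t + b * log (1 - t) ≤
      a * log c + b * log (1 - c) + (t - c) * (a / c - b / (1 - c)) := by
  have hlog_t : log t - log c ≤ (t - c) / c := by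
    rw [← log_div ht0.ne' hc0.ne', sub_div, div_self hc0.ne']
    exact log_le_sub_one_of_pos (div_pos ht0 hc0)
  have hlog_one_sub : log (1 - t) - log (1 - c) ≤ -((t - c) / (1 - c)) := by
    rw [← log_div (by linarith) (by linarith)]
    have hpos : 0 < (1 - t) / (1 - c) := div_pos (by linarith) (by linarith)
    have hsub : (1 - t) / (1 - c) - 1 = -((t - c) / (1 - c)) := by
      field_simp [(sub_pos.2 hc1).ne']
      ring
    linarith [log_le_sub_one_of_pos hpos]
  linear_combination mul_le_mul_of_nonneg_left hlog_t ha + mul_le_mul_of_nonneg_left hlog_one_sub hb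

lemma rpow_mul_one_sub_rpow_le_of_tangent (ha : 0 ≤ a) (hb : 0 ≤ b) (hc0 : 0 < c) (hc1 : c < 1)
    (ht0 : 0 < t) (ht1 : t < 1) (hslope : (t - c) * (a / c - b / (1 - c)) ≤ 0) :
    t ^ a * (1 - t) ^ b ≤ c ^ a * (1 - c) ^ b := by
  have htangent := mul_log_add_mul_log_one_sub_le ha hb hc0 hc1 ht0 ht1
  rw [rpow_def_of_pos ht0, rpow_def_of_pos (sub_pos.2 ht1), rpow_def_of_pos hc0,
    rpow_def_of_pos (sub_pos.2 hc1), ← exp_add, ← exp_add, exp_le_exp]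
  linarith

lemma rpow_mul_one_sub_rpow_le_of_le_of_mul_le (ha : 0 ≤ a) (hb : 0 ≤ b) (ht0 : 0 < t)
    (htc : t ≤ c) (hc1 : c < 1) (hmode : c * (a + b) ≤ a) :
    t ^ a * (1 - t) ^ b ≤ c ^ a * (1 - c) ^ b := by
  have hc0 : 0 < c := ht0.trans_le htc
  refine rpow_mul_one_sub_rpow_le_of_tangent ha hb hc0 hc1 ht0 (htc.trans_lt hc1) ?_
  refine mul_nonpos_of_nonpos_of_nonneg (by linarith) ?_
  rw [sub_nonneg, div_le_div_iff₀ (by linarith) hc0]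
  linarith

lemma rpow_mul_one_sub_rpow_le_mode (ha : 0 < a) (hb : 0 < b) (ht0 : 0 < t) (ht1 : t < 1) :
    t ^ a * (1 - t) ^ b ≤ (a / (a + b)) ^ a * (1 - a / (a + b)) ^ b := by
  have hab : 0 < a + b := add_pos ha hb
  have hmode0 : 0 < a / (a + b) := div_pos ha hab
  have hmode1 : a / (a + b) < 1 := (div_lt_one hab).2 (by linarith)
  refine rpow_mul_one_sub_rpow_le_of_tangent ha.le hb.le hmode0 hmode1 ht0 ht1 (le_of_eq ?_)
  have hone_sub : 1 - a / (a + b) = b / (a + b) := by field_simp; ring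
  rw [hone_sub, div_div_cancel₀ ha.ne', div_div_cancel₀ hb.ne']
  ring

lemma continuous_rpow_mul_one_sub_rpow (ha : 0 ≤ a) (hb : 0 ≤ b) :
    Continuous fun t : ℝ => t ^ a * (1 - t) ^ b :=
  (continuous_id.rpow_const fun _ => Or.inr ha).mul
    ((continuous_const.sub continuous_id).rpow_const fun _ => Or.inr hb)

end Kernel

section IncBeta

variable {x p q : ℝ}

lemma intervalIntegrable_incBeta_integrand (hp : 1 ≤ p) (hq : 1 ≤ q) (u v : ℝ) :
    IntervalIntegrable (fun t : ℝ => t ^ (p - 1) * (1 - t) ^ (q - 1)) MeasureTheory.volume u v :=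
  (continuous_rpow_mul_one_sub_rpow (by linarith) (by linarith)).intervalIntegrable u v

lemma incBeta_pos (hp : 1 ≤ p) (hq : 1 ≤ q) (hx0 : 0 < x) (hx1 : x ≤ 1) : 0 < incBeta x p q :=
  intervalIntegral.intervalIntegral_pos_of_pos_on (intervalIntegrable_incBeta_integrand hp hq _ _)
    (fun _ ht => mul_pos (rpow_pos_of_pos ht.1 _) (rpow_pos_of_pos (by linarith [ht.2]) _)) hx0

lemma incBeta_le_mul {M : ℝ} (hp : 1 ≤ p) (hq : 1 ≤ q) (hx : 0 ≤ x)
    (hM : ∀ t ∈ Ioo 0 x, t ^ (p - 1) * (1 - t) ^ (q - 1) ≤ M) :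
    incBeta x p q ≤ x * M := by
  have hmono := intervalIntegral.integral_mono_on_of_le_Ioo hx
    (intervalIntegrable_incBeta_integrand hp hq 0 x) intervalIntegrable_const hM
  simpa [incBeta] using hmono

lemma mul_le_incBeta {c d : ℝ} (hp : 1 ≤ p) (hq : 1 ≤ q) (hc : 0 < c) (hcd : c < d)
    (hdx : d ≤ x) (hx1 : x ≤ 1) :
    (d - c) * (c ^ (p - 1) * (1 - d) ^ (q - 1)) ≤ incBeta x p q := by
  have hrect : (d - c) * (c ^ (p - 1) * (1 - d) ^ (q - 1)) ≤
      ∫ t in c..d, t ^ (p - 1) * (1 - t) ^ (q - 1) := by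
    have hmono := intervalIntegral.integral_mono_on (f := fun _ => c ^ (p - 1) * (1 - d) ^ (q - 1))
      hcd.le intervalIntegrable_const
      (intervalIntegrable_incBeta_integrand hp hq c d)
      fun t ht => mul_le_mul (rpow_le_rpow hc.le ht.1 (by linarith))
        (rpow_le_rpow (by linarith [ht.2]) (by linarith [ht.2]) (by linarith))
        (rpow_nonneg (by linarith [ht.2]) _) (rpow_nonneg (by linarith [ht.1]) _)
    rwa [intervalIntegral.integral_const, smul_eq_mul] at hmono
  refine hrect.trans (intervalIntegral.integral_mono_interval hc.le hcd.le hdx ?_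
    (intervalIntegrable_incBeta_integrand hp hq 0 x))
  refine MeasureTheory.ae_restrict_of_forall_mem measurableSet_Ioc fun t ht => ?_
  exact mul_nonneg (rpow_nonneg ht.1.le _) (rpow_nonneg (by linarith [ht.2]) _)

end IncBeta

section Asymptotics

variable {p q : ℕ → ℝ} {ρ : ℝ}

lemma tendsto_one_div_add (hp : Tendsto p atTop atTop) (hq : Tendsto q atTop atTop) :
    Tendsto (fun k => 1 / (p k + q k)) atTop (𝓝 0) :=
  (hp.atTop_add_atTop hq).inv_tendsto_atTop.congr fun _ => (one_div _).symm

lemma tendsto_sub_one_div_add (hp : Tendsto p atTop atTop) (hq : Tendsto q atTop atTop)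
    (hratio : Tendsto (fun k => p k / (p k + q k)) atTop (𝓝 ρ)) :
    Tendsto (fun k => (p k - 1) / (p k + q k)) atTop (𝓝 ρ) ∧
      Tendsto (fun k => (q k - 1) / (p k + q k)) atTop (𝓝 (1 - ρ)) := by
  have hn := tendsto_one_div_add hp hq
  constructor
  · simpa only [sub_zero, sub_div] using hratio.sub hn
  · have hlim := (tendsto_const_nhds (x := (1 : ℝ))).sub (hratio.add hn)
    rw [add_zero] at hlim
    refine hlim.congr' ?_
    filter_upwards [(hp.atTop_add_atTop hq).eventually_gt_atTop 0] with k hk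
    field_simp
    ring

lemma tendsto_mode (hp : Tendsto p atTop atTop) (hq : Tendsto q atTop atTop)
    (hratio : Tendsto (fun k => p k / (p k + q k)) atTop (𝓝 ρ)) :
    Tendsto (fun k => (p k - 1) / (p k - 1 + (q k - 1))) atTop (𝓝 ρ) := by
  obtain ⟨hpn, hqn⟩ := tendsto_sub_one_div_add hp hq hratio
  have hlim := hpn.div (hpn.add hqn) (by simp)
  rw [add_sub_cancel, div_one] at hlim
  refine hlim.congr' ?_
  filter_upwards [(hp.atTop_add_atTop hq).eventually_gt_atTop 0] with k hk
  simp only [Pi.div_apply]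
  rw [← add_div, div_div_div_cancel_right₀ hk.ne']

lemma tendsto_scaled_log_mul_rpow_mul_rpow {u v : ℕ → ℝ} {α β C : ℝ}
    (hp : Tendsto p atTop atTop) (hq : Tendsto q atTop atTop)
    (hratio : Tendsto (fun k => p k / (p k + q k)) atTop (𝓝 ρ))
    (hu : Tendsto u atTop (𝓝 α)) (hv : Tendsto v atTop (𝓝 β)) (hα : 0 < α) (hβ : 0 < β)
    (hC : 0 < C) :
    Tendsto (fun k => 1 / (p k + q k) * log (C * (u k ^ (p k - 1) * v k ^ (q k - 1)))) atTop
      (𝓝 (ρ * log α + (1 - ρ) * log β)) := by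
  obtain ⟨hpn, hqn⟩ := tendsto_sub_one_div_add hp hq hratio
  have hlim := (((tendsto_one_div_add hp hq).mul_const (log C)).add
    (hpn.mul (hu.log hα.ne'))).add (hqn.mul (hv.log hβ.ne'))
  rw [zero_mul, zero_add] at hlim
  refine hlim.congr' ?_
  filter_upwards [hu.eventually (lt_mem_nhds hα), hv.eventually (lt_mem_nhds hβ)] with k hu0 hv0
  rw [log_mul hC.ne' (by positivity), log_mul (by positivity) (by positivity), log_rpow hu0,
    log_rpow hv0]
  ring

variable {e x : ℝ}

lemma eventually_lt_scaled_log_incBeta {w : ℝ} (hp : Tendsto p atTop atTop)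
    (hq : Tendsto q atTop atTop) (hratio : Tendsto (fun k => p k / (p k + q k)) atTop (𝓝 ρ))
    (he0 : 0 < e) (he1 : e < 1) (hex : e ≤ x) (hx1 : x ≤ 1) (hw : w < bernoulliLogLik ρ e) :
    ∀ᶠ k in atTop, w < 1 / (p k + q k) * log (incBeta x (p k) (q k)) := by
  have hleft : Tendsto (fun c => ρ * log c + (1 - ρ) * log (1 - e)) (𝓝[<] e)
      (𝓝 (bernoulliLogLik ρ e)) :=
    (((continuousAt_log he0.ne').tendsto.mono_left nhdsWithin_le_nhds).const_mul ρ).add_const _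
  obtain ⟨c, hwc, hc0, hce⟩ :=
    ((hleft.eventually (lt_mem_nhds hw)).and (Ioo_mem_nhdsLT he0)).exists
  have hrect := tendsto_scaled_log_mul_rpow_mul_rpow hp hq hratio tendsto_const_nhds
    tendsto_const_nhds hc0 (sub_pos.2 he1) (sub_pos.2 hce)
  filter_upwards [hrect.eventually (lt_mem_nhds hwc), hp.eventually_ge_atTop 1,
    hq.eventually_ge_atTop 1, (hp.atTop_add_atTop hq).eventually_gt_atTop 0] with k hk hpk hqk hn
  refine hk.trans_le (mul_le_mul_of_nonneg_left (log_le_log ?_ ?_) (by positivity))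
  · exact mul_pos (sub_pos.2 hce)
      (mul_pos (rpow_pos_of_pos hc0 _) (rpow_pos_of_pos (by linarith) _))
  · exact mul_le_incBeta hpk hqk hc0 hce hex hx1

theorem tendsto_scaled_log_incBeta {m : ℕ → ℝ} (hp : Tendsto p atTop atTop)
    (hq : Tendsto q atTop atTop) (hratio : Tendsto (fun k => p k / (p k + q k)) atTop (𝓝 ρ))
    (he0 : 0 < e) (he1 : e < 1) (hex : e ≤ x) (hx1 : x ≤ 1) (hm : Tendsto m atTop (𝓝 e))
    (hmax : ∀ᶠ k in atTop, ∀ t ∈ Ioo 0 x,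
      t ^ (p k - 1) * (1 - t) ^ (q k - 1) ≤ m k ^ (p k - 1) * (1 - m k) ^ (q k - 1)) :
    Tendsto (fun k => 1 / (p k + q k) * log (incBeta x (p k) (q k))) atTop
      (𝓝 (bernoulliLogLik ρ e)) := by
  have hx0 : 0 < x := he0.trans_le hex
  have hupper := tendsto_scaled_log_mul_rpow_mul_rpow hp hq hratio hm (tendsto_const_nhds.sub hm)
    he0 (sub_pos.2 he1) hx0
  refine tendsto_order.2 ⟨fun w hw => eventually_lt_scaled_log_incBeta hp hq hratio he0 he1 hex
    hx1 hw, fun w hw => ?_⟩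
  filter_upwards [hupper.eventually (gt_mem_nhds hw), hmax, hp.eventually_ge_atTop 1,
    hq.eventually_ge_atTop 1, (hp.atTop_add_atTop hq).eventually_gt_atTop 0]
    with k hk hmk hpk hqk hn
  refine lt_of_le_of_lt (mul_le_mul_of_nonneg_left (log_le_log (incBeta_pos hpk hqk hx0 hx1)
    (incBeta_le_mul hpk hqk hx0.le hmk)) (by positivity)) hk

lemma tendsto_scaled_log_incBeta_of_lt (hp : Tendsto p atTop atTop) (hq : Tendsto q atTop atTop)
    (hratio : Tendsto (fun k => p k / (p k + q k)) atTop (𝓝 ρ)) (hx0 : 0 < x) (hx1 : x < 1)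
    (hxρ : x < ρ) :
    Tendsto (fun k => 1 / (p k + q k) * log (incBeta x (p k) (q k))) atTop
      (𝓝 (bernoulliLogLik ρ x)) := by
  refine tendsto_scaled_log_incBeta hp hq hratio hx0 hx1 le_rfl hx1.le tendsto_const_nhds ?_
  filter_upwards [(tendsto_mode hp hq hratio).eventually (lt_mem_nhds hxρ),
    hp.eventually_ge_atTop 2, hq.eventually_ge_atTop 2] with k hk hpk hqk t ht
  rw [lt_div_iff₀ (by linarith)] at hk
  exact rpow_mul_one_sub_rpow_le_of_le_of_mul_le (by linarith) (by linarith) ht.1 ht.2.le hx1 hk.le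

lemma tendsto_scaled_log_incBeta_one (hp : Tendsto p atTop atTop) (hq : Tendsto q atTop atTop)
    (hratio : Tendsto (fun k => p k / (p k + q k)) atTop (𝓝 ρ)) (hρ0 : 0 < ρ)
    (hρ1 : ρ < 1) :
    Tendsto (fun k => 1 / (p k + q k) * log (incBeta 1 (p k) (q k))) atTop
      (𝓝 (bernoulliLogLik ρ ρ)) := by
  refine tendsto_scaled_log_incBeta hp hq hratio hρ0 hρ1 hρ1.le le_rfl
    (tendsto_mode hp hq hratio) ?_
  filter_upwards [hp.eventually_ge_atTop 2, hq.eventually_ge_atTop 2] with k hpk hqk t ht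
  exact rpow_mul_one_sub_rpow_le_mode (by linarith) (by linarith) ht.1 ht.2

end Asymptotics

theorem stmt19_general (x ρ : ℝ) (hx : 0 < x) (hxρ : x < ρ) (hρ : ρ < 1)
    (p q : ℕ → ℝ)
    (hp : Tendsto p atTop atTop) (hq : Tendsto q atTop atTop)
    (hratio : Tendsto (fun k => p k / (p k + q k)) atTop (nhds ρ)) :
    Tendsto (fun k => (1 / (p k + q k)) * Real.log (regIncBeta x (p k) (q k))) atTop
      (nhds (-(ρ * Real.log (ρ / x) + (1 - ρ) * Real.log ((1 - ρ) / (1 - x))))) := by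
  have hx1 : x < 1 := hxρ.trans hρ
  have hρ0 : 0 < ρ := hx.trans hxρ
  have hlim := (tendsto_scaled_log_incBeta_of_lt hp hq hratio hx hx1 hxρ).sub
    (tendsto_scaled_log_incBeta_one hp hq hratio hρ0 hρ)
  have hkl : bernoulliLogLik ρ x - bernoulliLogLik ρ ρ =
      -(ρ * log (ρ / x) + (1 - ρ) * log ((1 - ρ) / (1 - x))) := by
    rw [bernoulliLogLik, bernoulliLogLik, log_div hρ0.ne' hx.ne',
      log_div (sub_pos.2 hρ).ne' (sub_pos.2 hx1).ne']
    ring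
  rw [hkl] at hlim
  refine hlim.congr' ?_
  filter_upwards [hp.eventually_ge_atTop 1, hq.eventually_ge_atTop 1] with k hpk hqk
  rw [regIncBeta_eq_div, log_div (incBeta_pos hpk hqk hx hx1.le).ne'
    (incBeta_pos hpk hqk one_pos le_rfl).ne']
  ring

/-- If p, q → ∞ with p/(p+q) → ρ and p/(p+q) > x throughout, where 0 < x < ρ < 1, then
(1/(p+q)) ln I_x(p,q) → −[ρ ln(ρ/x) + (1−ρ) ln((1−ρ)/(1−x))]. -/
theorem stmt19 (x ρ : ℝ) (hx : 0 < x) (hxρ : x < ρ) (hρ : ρ < 1)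
    (p q : ℕ → ℝ)
    (hp : Tendsto p atTop atTop) (hq : Tendsto q atTop atTop)
    (hgt : ∀ k, x < p k / (p k + q k))
    (hratio : Tendsto (fun k => p k / (p k + q k)) atTop (nhds ρ)) :
    Tendsto (fun k => (1 / (p k + q k)) * Real.log (regIncBeta x (p k) (q k))) atTop
      (nhds (-(ρ * Real.log (ρ / x) + (1 - ρ) * Real.log ((1 - ρ) / (1 - x))))) :=
  stmt19_general x ρ hx hxρ hρ p q hp hq hratio
end
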